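/- t-privacy of the Goldberg-style PIR query (vector form): let F be a field, r, t natural numbers, θ ∈ Fin r a target index, and α_1, …, α_t pairwise distinct nonzero elements of F. Then the map sending an r-tuple of polynomials (f_1, …, f_r), with deg f_j ≤ t for all j and f_j(0) = 1 if j = θ and f_j(0) = 0 otherwise, to the r×t matrix of evaluations (f_j(α_i))_{j,i}, is a bijection onto F^{r×t}. In particular, the number of query tuples consistent with any view of at most t servers is the same for every target index θ, so a coalition of at most t servers learns nothing about θ. -/
import Mathlib


/-- t-privacy of the Goldberg-style PIR query (vector form): the map sending an
r-tuple of degree-≤t polynomials with constant terms equal to the standard basis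
vector `e_θ` to its r×t matrix of evaluations at `t` pairwise distinct nonzero
points is a bijection onto `F^{r×t}`. -/
theorem goldberg_query_bijective {F : Type*} [Field F] (r t : ℕ) (θ : Fin r)
    (α : Fin t → F) (hα0 : ∀ i, α i ≠ 0) (hαinj : Function.Injective α) :
    Function.Bijective
      (fun f : {f : Fin r → Polynomial F //
          ∀ j, (f j).degree ≤ t ∧ (f j).eval 0 = (if j = θ then (1 : F) else 0)} =>
        fun (j : Fin r) (i : Fin t) => ((f : Fin r → Polynomial F) j).eval (α i)) := by
  classical
  set v : Fin (t + 1) → F := Fin.cons 0 α with hv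
  have hvinj : Function.Injective v := by
    rw [hv, Fin.cons_injective_iff]
    exact ⟨by simpa using fun i h => hα0 i h, hαinj⟩
  have hvs : Set.InjOn v (Finset.univ : Finset (Fin (t + 1))) := hvinj.injOn
  have hcard : ((Finset.univ : Finset (Fin (t + 1))).card : WithBot ℕ) = (t + 1 : ℕ) := by
    simp
  constructor
  · rintro ⟨f, hf⟩ ⟨g, hg⟩ hfg
    simp only [Subtype.mk.injEq] at hfg ⊢
    funext j
    have hfg' : ∀ i, (f j).eval (α i) = (g j).eval (α i) := fun i =>
      congrFun (congrFun hfg j) i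
    refine Polynomial.eq_of_degrees_lt_of_eval_index_eq (v := v) Finset.univ hvs ?_ ?_ ?_
    · rw [show (Finset.univ : Finset (Fin (t+1))).card = t + 1 by simp]
      exact lt_of_le_of_lt (hf j).1 (by exact_mod_cast WithBot.coe_lt_coe.mpr (Nat.lt_succ_self t))
    · rw [show (Finset.univ : Finset (Fin (t+1))).card = t + 1 by simp]
      exact lt_of_le_of_lt (hg j).1 (by exact_mod_cast WithBot.coe_lt_coe.mpr (Nat.lt_succ_self t))
    · intro i _
      refine Fin.cases ?_ ?_ i
      · simp only [hv, Fin.cons_zero]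
        rw [(hf j).2, (hg j).2]
      · intro i'
        simpa [hv] using hfg' i'
  · intro M
    refine ⟨⟨fun j => Lagrange.interpolate Finset.univ v
        (Fin.cons (if j = θ then (1 : F) else 0) (M j)), fun j => ⟨?_, ?_⟩⟩, ?_⟩
    · have := Lagrange.degree_interpolate_lt (v := v)
        (r := Fin.cons (if j = θ then (1 : F) else 0) (M j)) hvs
      rw [show (Finset.univ : Finset (Fin (t+1))).card = t + 1 by simp] at this
      exact Order.le_of_lt_succ (by exact_mod_cast this)
    · have := Lagrange.eval_interpolate_at_node (v := v)
        (r := Fin.cons (if j = θ then (1 : F) else 0) (M j)) hvs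
        (Finset.mem_univ (0 : Fin (t + 1)))
      simpa [hv] using this
    · funext j i
      have := Lagrange.eval_interpolate_at_node (v := v)
        (r := Fin.cons (if j = θ then (1 : F) else 0) (M j)) hvs
        (Finset.mem_univ i.succ)
      simpa [hv] using this
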